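/- Let n1, n2 be natural numbers, a_1,…,a_{n1}, b_1,…,b_{n2} ∈ ℂ, z_1,…,z_{n1} ∈ ℂ and z* ∈ ℂ, and define f(z) = Σ_{j=1}^{n1} a_j cot((z − z_j)/2) + Σ_{j=1}^{n2} b_j tan((z − z*)/2)^j. Then f(z) tends to the constant −i·Σ_{j=1}^{n1} a_j + Σ_{j=1}^{n2} b_j i^j as Im z tends to +∞, and f(z) tends to the constant i·Σ_{j=1}^{n1} a_j + Σ_{j=1}^{n2} b_j (−i)^j as Im z tends to −∞. -/

import Mathlib

/-!
As `Im w → +∞` we have `exp (2 i w) → 0`, so `cot w = (exp (2 i w) + 1) / (i (1 - exp (2 i w)))`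
tends to `-i` and `tan w = (cot w)⁻¹` to `i`; oddness of `cot` gives the limits `i`, `-i` as
`Im w → -∞`. Both filters are preserved by `z ↦ (z - c) / 2`, and the ansatz is a finite linear
combination of such terms and their powers.
-/

open Filter Topology

namespace Complex

lemma tendsto_exp_two_mul_I_mul_comap_im_atTop :
    Tendsto (fun w : ℂ => exp (2 * I * w)) (comap im atTop) (𝓝 0) := by
  rw [tendsto_zero_iff_norm_tendsto_zero]
  have hnorm (w : ℂ) : ‖exp (2 * I * w)‖ = Real.exp (-(2 * w.im)) := by
    simp [norm_exp]
  simp only [hnorm]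
  exact Real.tendsto_exp_atBot.comp <| tendsto_neg_atTop_atBot.comp <|
    tendsto_comap.const_mul_atTop two_pos

lemma tendsto_cot_comap_im_atTop : Tendsto cot (comap im atTop) (𝓝 (-I)) := by
  have hq := tendsto_exp_two_mul_I_mul_comap_im_atTop
  have hlim := (hq.add_const 1).div ((tendsto_const_nhds (x := (1 : ℂ)).sub hq).const_mul I)
    (by simp)
  simp only [zero_add, sub_zero, mul_one, one_div, inv_I] at hlim
  exact hlim.congr fun w => (cot_eq_exp_ratio w).symm

lemma tendsto_neg_comap_im_atBot : Tendsto Neg.neg (comap im atBot) (comap im atTop) :=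
  tendsto_comap_iff.mpr <| by
    simpa [Function.comp_def] using tendsto_neg_atBot_atTop.comp (tendsto_comap (f := im))

lemma tendsto_cot_comap_im_atBot : Tendsto cot (comap im atBot) (𝓝 I) := by
  have cot_neg (w : ℂ) : cot (-w) = -cot w := by
    simp only [cot_eq_cos_div_sin, cos_neg, sin_neg, div_neg]
  simpa [Function.comp_def, cot_neg] using
    (tendsto_cot_comap_im_atTop.comp tendsto_neg_comap_im_atBot).neg

lemma tendsto_sub_div_two_comap_im_atTop (c : ℂ) :
    Tendsto (fun z => (z - c) / 2) (comap im atTop) (comap im atTop) :=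
  tendsto_comap_iff.mpr <| by
    simpa [Function.comp_def, sub_eq_add_neg] using
      ((tendsto_comap (f := im) (x := atTop)).atTop_add
        (tendsto_const_nhds (x := -c.im))).atTop_div_const two_pos

lemma tendsto_sub_div_two_comap_im_atBot (c : ℂ) :
    Tendsto (fun z => (z - c) / 2) (comap im atBot) (comap im atBot) :=
  tendsto_comap_iff.mpr <| by
    simpa [Function.comp_def, sub_eq_add_neg] using
      ((tendsto_comap (f := im) (x := atBot)).atBot_add
        (tendsto_const_nhds (x := -c.im))).atBot_div_const two_pos

lemma tendsto_tan_of_tendsto_cot {l : Filter ℂ} {α : ℂ} (hα : α ≠ 0)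
    (h : Tendsto cot l (𝓝 α)) : Tendsto tan l (𝓝 α⁻¹) := by
  simpa only [cot_inv_eq_tan] using h.inv₀ hα

end Complex

open Complex in
theorem tendsto_lightning_ansatz {l : Filter ℂ} {α : ℂ} (hα : α ≠ 0)
    (hshift : ∀ c, Tendsto (fun z => (z - c) / 2) l l) (hcot : Tendsto cot l (𝓝 α))
    (n1 n2 : ℕ) (a b zs : ℕ → ℂ) (zstar : ℂ) :
    Tendsto (fun z => (∑ j ∈ Finset.Icc 1 n1, a j * cot ((z - zs j) / 2)) +
        (∑ j ∈ Finset.Icc 1 n2, b j * tan ((z - zstar) / 2) ^ j)) l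
      (𝓝 (α * (∑ j ∈ Finset.Icc 1 n1, a j) + ∑ j ∈ Finset.Icc 1 n2, b j * α⁻¹ ^ j)) := by
  rw [Finset.mul_sum]
  simp_rw [mul_comm α]
  refine (tendsto_finsetSum _ fun j _ => ?_).add (tendsto_finsetSum _ fun j _ => ?_)
  · exact (hcot.comp (hshift (zs j))).const_mul (a j)
  · exact (((tendsto_tan_of_tendsto_cot hα hcot).comp (hshift zstar)).pow j).const_mul (b j)

/-- The periodized lightning ansatz
`f(z) = Σ_{j=1}^{n1} a_j cot((z − z_j)/2) + Σ_{j=1}^{n2} b_j tan((z − z*)/2)^j`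
tends to `−i·Σ a_j + Σ b_j i^j` as `Im z → +∞` and to
`i·Σ a_j + Σ b_j (−i)^j` as `Im z → −∞`. -/
theorem lightning_ansatz_limits_at_infinity (n1 n2 : ℕ) (a b zs : ℕ → ℂ) (zstar : ℂ)
    (f : ℂ → ℂ)
    (hf : ∀ z : ℂ, f z =
        (∑ j ∈ Finset.Icc 1 n1, a j * Complex.cot ((z - zs j) / 2)) +
        (∑ j ∈ Finset.Icc 1 n2, b j * Complex.tan ((z - zstar) / 2) ^ j)) :
    Filter.Tendsto f (Filter.comap Complex.im Filter.atTop)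
      (𝓝 (-Complex.I * (∑ j ∈ Finset.Icc 1 n1, a j)
          + ∑ j ∈ Finset.Icc 1 n2, b j * Complex.I ^ j)) ∧
    Filter.Tendsto f (Filter.comap Complex.im Filter.atBot)
      (𝓝 (Complex.I * (∑ j ∈ Finset.Icc 1 n1, a j)
          + ∑ j ∈ Finset.Icc 1 n2, b j * (-Complex.I) ^ j)) := by
  obtain rfl : f = _ := funext hf
  constructor
  · simpa using tendsto_lightning_ansatz (neg_ne_zero.mpr Complex.I_ne_zero)
      Complex.tendsto_sub_div_two_comap_im_atTop Complex.tendsto_cot_comap_im_atTop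
      n1 n2 a b zs zstar
  · simpa using tendsto_lightning_ansatz Complex.I_ne_zero
      Complex.tendsto_sub_div_two_comap_im_atBot Complex.tendsto_cot_comap_im_atBot
      n1 n2 a b zs zstar
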